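/- In the setting of Lemma A.2, let h be a bounded measurable function with q_0 := inf{q(x) : x ∈ supp(h)} > 0. Then for all k ∈ ℕ*, E^x (∫_0^{T_1} h(X_s) ds)^k ≤ (k! ‖h‖_∞^{k−1} / q_0^{k−1}) · R_q*|h|(x). -/

import Mathlib

/-!
Write `a = q(X*)` and `b = h(X*)` along a path of the killed process, and `A, B, V` for the
primitives of `a, b, |b|`. By the killing representation the `k`-th moment is
`E^x ∫_0^∞ e^{-A} a B^k`, and `|B| ≤ V`, so it suffices to bound
`m_k = ∫_0^∞ e^{-A} a V^k` path by path. Since `e^{-A} V^j` is absolutely continuous with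
derivative `e^{-A} (j |b| V^{j-1} - a V^j)` a.e., `m_j ≤ j l_{j-1}` where
`l_j = ∫_0^∞ e^{-A} |b| V^j`; and `|h| ≤ (‖h‖_∞ / q₀) q` gives `l_j ≤ (‖h‖_∞ / q₀) m_j`.
Hence `m_k ≤ k! (‖h‖_∞ / q₀)^{k-1} l_0`, and `E^x l_0 = R_q* |h| (x)`.
-/

open MeasureTheory Filter Set

theorem LipschitzOnWith.comp_absolutelyContinuousOnInterval {X Y : Type*} [PseudoMetricSpace X]
    [PseudoMetricSpace Y] {f : ℝ → X} {g : X → Y} {s : Set X} {K : NNReal} {a b : ℝ}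
    (hg : LipschitzOnWith K g s) (hf : AbsolutelyContinuousOnInterval f a b)
    (hfs : MapsTo f (uIcc a b) s) : AbsolutelyContinuousOnInterval (g ∘ f) a b := by
  unfold AbsolutelyContinuousOnInterval at hf ⊢
  refine squeeze_zero' (Eventually.of_forall fun _ ↦ Finset.sum_nonneg fun _ _ ↦ dist_nonneg)
    ?_ (by simpa using hf.const_mul (K : ℝ))
  rw [eventually_inf_principal]
  filter_upwards with E hE
  rw [Finset.mul_sum]
  gcongr with i hi
  exact hg.dist_le_mul _ (hfs (hE.1 i hi).1) _ (hfs (hE.1 i hi).2)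

theorem ContDiff.comp_absolutelyContinuousOnInterval {g f : ℝ → ℝ} {a b : ℝ}
    (hg : ContDiff ℝ 1 g) (hf : AbsolutelyContinuousOnInterval f a b) :
    AbsolutelyContinuousOnInterval (g ∘ f) a b := by
  obtain ⟨C, hC⟩ := hf.exists_bound
  obtain ⟨K, hK⟩ := hg.contDiffOn.exists_lipschitzOnWith one_ne_zero (convex_closedBall 0 C)
    (isCompact_closedBall 0 C)
  exact hK.comp_absolutelyContinuousOnInterval hf fun x hx ↦ mem_closedBall_zero_iff.2 (hC x hx)

theorem MeasureTheory.LocallyIntegrable.intervalIntegrable {E : Type*} [NormedAddCommGroup E]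
    {μ : Measure ℝ} {f : ℝ → E} (hf : LocallyIntegrable f μ) (a b : ℝ) :
    IntervalIntegrable f μ a b :=
  (hf.integrableOn_isCompact isCompact_uIcc).intervalIntegrable

theorem MeasureTheory.LocallyIntegrable.continuous_primitive {f : ℝ → ℝ}
    (hf : LocallyIntegrable f volume) : Continuous fun t ↦ ∫ s in (0 : ℝ)..t, f s :=
  intervalIntegral.continuous_primitive hf.intervalIntegrable 0

theorem MeasureTheory.LocallyIntegrable.abs_of_abs_le_mul {X : Type*} [TopologicalSpace X]
    [MeasurableSpace X] {μ : Measure X} {a b : X → ℝ} (ha : LocallyIntegrable a μ)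
    (hb : AEStronglyMeasurable b μ) {c : ℝ} (hba : ∀ t, |b t| ≤ c * a t) :
    LocallyIntegrable (fun t ↦ |b t|) μ :=
  (ha.smul c).mono hb.norm <| ae_of_all _ fun t ↦ by
    simpa only [Real.norm_eq_abs, abs_abs, Pi.smul_apply, smul_eq_mul] using
      (hba t).trans (le_abs_self _)

theorem integrableOn_Ioi_of_intervalIntegral_le {f : ℝ → ℝ} {C : ℝ}
    (hf : ∀ T, IntervalIntegrable f volume 0 T) (hf0 : ∀ t ∈ Ioi 0, 0 ≤ f t)
    (hC : ∀ T, 0 ≤ T → ∫ t in (0 : ℝ)..T, f t ≤ C) : IntegrableOn f (Ioi 0) := by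
  refine integrableOn_Ioi_of_intervalIntegral_norm_bounded C 0
    (fun T ↦ (intervalIntegrable_iff.1 (hf T)).mono_set Ioc_subset_uIoc) tendsto_id ?_
  filter_upwards [eventually_ge_atTop 0] with T hT
  refine le_of_eq_of_le (intervalIntegral.integral_congr_ae ?_) (hC T hT)
  filter_upwards with t ht
  rw [uIoc_of_le hT] at ht
  exact Real.norm_of_nonneg (hf0 t ht.1)

theorem measurable_intervalIntegral_primitive {α : Type*} [MeasurableSpace α]
    {f : α → ℝ → ℝ} (hf : Measurable (Function.uncurry f)) :
    Measurable fun p : α × ℝ ↦ ∫ s in (0 : ℝ)..p.2, f p.1 s := by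
  have hIoc {l u : α × ℝ → ℝ} (hl : Measurable l) (hu : Measurable u) :
      Measurable fun p : α × ℝ ↦ ∫ s in Ioc (l p) (u p), f p.1 s := by
    have hset : MeasurableSet {q : (α × ℝ) × ℝ | q.2 ∈ Ioc (l q.1) (u q.1)} :=
      (measurableSet_lt (hl.comp measurable_fst) measurable_snd).inter
        (measurableSet_le measurable_snd (hu.comp measurable_fst))
    have hF : Measurable fun q : (α × ℝ) × ℝ ↦
        (Ioc (l q.1) (u q.1)).indicator (f q.1.1) q.2 :=
      (hf.comp (measurable_fst.fst.prodMk measurable_snd)).piecewise hset measurable_const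
    simp_rw [← integral_indicator measurableSet_Ioc]
    exact hF.stronglyMeasurable.integral_prod_right'.measurable
  exact (hIoc measurable_const measurable_snd).sub (hIoc measurable_snd measurable_const)

theorem measurable_setIntegral_exp_neg_primitive_mul {α : Type*} [MeasurableSpace α]
    {a w : α → ℝ → ℝ} (ha : Measurable (Function.uncurry a))
    (hw : Measurable (Function.uncurry w)) :
    Measurable fun x ↦ ∫ t in Ioi 0, Real.exp (-∫ s in (0 : ℝ)..t, a x s) * w x t :=
  ((measurable_intervalIntegral_primitive ha).neg.exp.mul hw).stronglyMeasurable
    |>.integral_prod_right'.measurable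

theorem integral_le_integral_of_le_of_nonneg {α : Type*} [MeasurableSpace α] {μ : Measure α}
    {f g : α → ℝ} (hg : Integrable g μ) (hg0 : 0 ≤ᵐ[μ] g) (hfg : f ≤ᵐ[μ] g) :
    ∫ x, f x ∂μ ≤ ∫ x, g x ∂μ := by
  by_cases hf : Integrable f μ
  · exact integral_mono_ae hf hg hfg
  · rw [integral_undef hf]
    exact integral_nonneg_of_ae hg0

section KilledMoments

variable {a v : ℝ → ℝ}

theorem intervalIntegrable_exp_neg_primitive_mul_mul_pow (ha : LocallyIntegrable a volume)
    (hv : LocallyIntegrable v volume) {w : ℝ → ℝ} (hw : LocallyIntegrable w volume)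
    (j : ℕ) (T : ℝ) :
    IntervalIntegrable (fun t ↦ Real.exp (-∫ s in (0 : ℝ)..t, a s) * w t
      * (∫ s in (0 : ℝ)..t, v s) ^ j) volume 0 T :=
  ((hw.intervalIntegrable 0 T).continuousOn_mul
    ha.continuous_primitive.neg.rexp.continuousOn).mul_continuousOn
    (hv.continuous_primitive.pow j).continuousOn

-- `0 ^ j` is `(∫ s in 0..0, v s) ^ j`; at `j = 0` the truncated `j - 1` is killed by
-- the factor `j`.
theorem integral_deriv_exp_neg_primitive_mul_pow (ha : LocallyIntegrable a volume)
    (hv : LocallyIntegrable v volume) (j : ℕ) (T : ℝ) :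
    ∫ t in (0 : ℝ)..T, (j * (Real.exp (-∫ s in (0 : ℝ)..t, a s) * v t
        * (∫ s in (0 : ℝ)..t, v s) ^ (j - 1))
        - Real.exp (-∫ s in (0 : ℝ)..t, a s) * a t * (∫ s in (0 : ℝ)..t, v s) ^ j)
      = Real.exp (-∫ s in (0 : ℝ)..T, a s) * (∫ s in (0 : ℝ)..T, v s) ^ j - 0 ^ j := by
  have hF : AbsolutelyContinuousOnInterval
      (fun t ↦ Real.exp (-∫ s in (0 : ℝ)..t, a s) * (∫ s in (0 : ℝ)..t, v s) ^ j) 0 T :=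
    ((Real.contDiff_exp.comp contDiff_neg).comp_absolutelyContinuousOnInterval
      ((ha.intervalIntegrable 0 T).absolutelyContinuousOnInterval_intervalIntegral
        left_mem_uIcc)).fun_mul
    ((contDiff_id.pow j).comp_absolutelyContinuousOnInterval
      ((hv.intervalIntegrable 0 T).absolutelyContinuousOnInterval_intervalIntegral
        left_mem_uIcc))
  convert hF.integral_deriv_eq_sub using 1
  · refine intervalIntegral.integral_congr_ae ?_
    filter_upwards [LocallyIntegrable.ae_hasDerivAt_integral ha,
      LocallyIntegrable.ae_hasDerivAt_integral hv] with t hA hV _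
    refine (((hA 0).neg.exp.mul ((hV 0).pow j)).deriv.trans ?_).symm
    simp only [Pi.neg_apply, Pi.pow_apply]
    ring
  · simp

theorem integral_exp_neg_primitive_mul_mul_pow_le (ha : LocallyIntegrable a volume)
    (hv : LocallyIntegrable v volume) (hv0 : 0 ≤ v) (j : ℕ) {T : ℝ} (hT : 0 ≤ T) :
    ∫ t in (0 : ℝ)..T,
        Real.exp (-∫ s in (0 : ℝ)..t, a s) * a t * (∫ s in (0 : ℝ)..t, v s) ^ j
      ≤ j * (∫ t in (0 : ℝ)..T, Real.exp (-∫ s in (0 : ℝ)..t, a s) * v t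
          * (∫ s in (0 : ℝ)..t, v s) ^ (j - 1)) + 0 ^ j := by
  have hFTC := integral_deriv_exp_neg_primitive_mul_pow ha hv j T
  rw [intervalIntegral.integral_sub
    ((intervalIntegrable_exp_neg_primitive_mul_mul_pow ha hv hv _ T).const_mul _)
    (intervalIntegrable_exp_neg_primitive_mul_mul_pow ha hv ha j T),
    intervalIntegral.integral_const_mul] at hFTC
  have hV : 0 ≤ ∫ s in (0 : ℝ)..T, v s :=
    intervalIntegral.integral_nonneg hT fun s _ ↦ hv0 s
  have : 0 ≤ Real.exp (-∫ s in (0 : ℝ)..T, a s) * (∫ s in (0 : ℝ)..T, v s) ^ j := by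
    positivity
  linarith

theorem integral_exp_neg_primitive_mul_mul_pow_le_mul (ha : LocallyIntegrable a volume)
    (hv : LocallyIntegrable v volume) (hv0 : 0 ≤ v) {c : ℝ} (hva : ∀ t, v t ≤ c * a t)
    (j : ℕ) {T : ℝ} (hT : 0 ≤ T) :
    ∫ t in (0 : ℝ)..T,
        Real.exp (-∫ s in (0 : ℝ)..t, a s) * v t * (∫ s in (0 : ℝ)..t, v s) ^ j
      ≤ c * ∫ t in (0 : ℝ)..T, Real.exp (-∫ s in (0 : ℝ)..t, a s) * a t
          * (∫ s in (0 : ℝ)..t, v s) ^ j := by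
  rw [← intervalIntegral.integral_const_mul]
  refine intervalIntegral.integral_mono_on hT
    (intervalIntegrable_exp_neg_primitive_mul_mul_pow ha hv hv j T)
    ((intervalIntegrable_exp_neg_primitive_mul_mul_pow ha hv ha j T).const_mul c) fun t ht ↦ ?_
  have hV : 0 ≤ ∫ s in (0 : ℝ)..t, v s :=
    intervalIntegral.integral_nonneg ht.1 fun s _ ↦ hv0 s
  calc _ ≤ Real.exp (-∫ s in (0 : ℝ)..t, a s) * (c * a t)
        * (∫ s in (0 : ℝ)..t, v s) ^ j := by gcongr; exact hva t
    _ = _ := by ring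

theorem integral_exp_neg_primitive_mul_mul_pow_succ_le (ha : LocallyIntegrable a volume)
    (hv : LocallyIntegrable v volume) (hv0 : 0 ≤ v) {c : ℝ} (hc : 0 ≤ c)
    (hva : ∀ t, v t ≤ c * a t) (k : ℕ) {T : ℝ} (hT : 0 ≤ T) :
    ∫ t in (0 : ℝ)..T, Real.exp (-∫ s in (0 : ℝ)..t, a s) * a t
        * (∫ s in (0 : ℝ)..t, v s) ^ (k + 1)
      ≤ (k + 1).factorial * c ^ k
          * ∫ t in (0 : ℝ)..T, Real.exp (-∫ s in (0 : ℝ)..t, a s) * v t := by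
  induction k with
  | zero => simpa using integral_exp_neg_primitive_mul_mul_pow_le ha hv hv0 1 hT
  | succ k ih =>
    calc _ ≤ (k + 2 : ℕ) * ∫ t in (0 : ℝ)..T, Real.exp (-∫ s in (0 : ℝ)..t, a s) * v t
          * (∫ s in (0 : ℝ)..t, v s) ^ (k + 1) := by
          simpa using integral_exp_neg_primitive_mul_mul_pow_le ha hv hv0 (k + 2) hT
      _ ≤ (k + 2 : ℕ) * (c * ((k + 1).factorial * c ^ k
          * ∫ t in (0 : ℝ)..T, Real.exp (-∫ s in (0 : ℝ)..t, a s) * v t)) := by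
          gcongr
          exact (integral_exp_neg_primitive_mul_mul_pow_le_mul ha hv hv0 hva _ hT).trans
            (mul_le_mul_of_nonneg_left ih hc)
      _ = _ := by
          rw [Nat.factorial_succ (k + 1)]
          push_cast
          ring

theorem integral_exp_neg_primitive_mul_le_one (ha : LocallyIntegrable a volume) {T : ℝ}
    (hT : 0 ≤ T) : ∫ t in (0 : ℝ)..T, Real.exp (-∫ s in (0 : ℝ)..t, a s) * a t ≤ 1 := by
  simpa using integral_exp_neg_primitive_mul_mul_pow_le ha locallyIntegrable_zero le_rfl 0 hT

theorem integral_exp_neg_primitive_mul_le (ha : LocallyIntegrable a volume)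
    (hv : LocallyIntegrable v volume) (hv0 : 0 ≤ v) {c : ℝ} (hc : 0 ≤ c)
    (hva : ∀ t, v t ≤ c * a t) {T : ℝ} (hT : 0 ≤ T) :
    ∫ t in (0 : ℝ)..T, Real.exp (-∫ s in (0 : ℝ)..t, a s) * v t ≤ c := by
  have h := integral_exp_neg_primitive_mul_mul_pow_le_mul ha hv hv0 hva 0 hT
  simp only [pow_zero, mul_one] at h
  exact h.trans (mul_le_of_le_one_right hc (integral_exp_neg_primitive_mul_le_one ha hT))

theorem integrableOn_Ioi_exp_neg_primitive_mul (ha : LocallyIntegrable a volume)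
    (hv : LocallyIntegrable v volume) (hv0 : 0 ≤ v) {c : ℝ} (hc : 0 ≤ c)
    (hva : ∀ t, v t ≤ c * a t) :
    IntegrableOn (fun t ↦ Real.exp (-∫ s in (0 : ℝ)..t, a s) * v t) (Ioi 0) :=
  integrableOn_Ioi_of_intervalIntegral_le
    (fun T ↦ by simpa using intervalIntegrable_exp_neg_primitive_mul_mul_pow ha hv hv 0 T)
    (fun t _ ↦ mul_nonneg (Real.exp_pos _).le (hv0 t))
    fun _ ↦ integral_exp_neg_primitive_mul_le ha hv hv0 hc hva

theorem setIntegral_Ioi_exp_neg_primitive_mul_le (ha : LocallyIntegrable a volume)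
    (hv : LocallyIntegrable v volume) (hv0 : 0 ≤ v) {c : ℝ} (hc : 0 ≤ c)
    (hva : ∀ t, v t ≤ c * a t) :
    ∫ t in Ioi 0, Real.exp (-∫ s in (0 : ℝ)..t, a s) * v t ≤ c :=
  le_of_tendsto (intervalIntegral_tendsto_integral_Ioi 0
    (integrableOn_Ioi_exp_neg_primitive_mul ha hv hv0 hc hva) tendsto_id)
    ((eventually_ge_atTop 0).mono fun _ ↦ integral_exp_neg_primitive_mul_le ha hv hv0 hc hva)

theorem integrableOn_Ioi_exp_neg_primitive_mul_mul_pow_succ (ha : LocallyIntegrable a volume)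
    (ha0 : 0 ≤ a) (hv : LocallyIntegrable v volume) (hv0 : 0 ≤ v) {c : ℝ} (hc : 0 ≤ c)
    (hva : ∀ t, v t ≤ c * a t) (k : ℕ) :
    IntegrableOn (fun t ↦ Real.exp (-∫ s in (0 : ℝ)..t, a s) * a t
      * (∫ s in (0 : ℝ)..t, v s) ^ (k + 1)) (Ioi 0) := by
  refine integrableOn_Ioi_of_intervalIntegral_le
    (intervalIntegrable_exp_neg_primitive_mul_mul_pow ha hv ha _) (fun t ht ↦ ?_)
    fun T hT ↦ (integral_exp_neg_primitive_mul_mul_pow_succ_le ha hv hv0 hc hva k hT).trans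
      (mul_le_mul_of_nonneg_left (integral_exp_neg_primitive_mul_le ha hv hv0 hc hva hT)
        (by positivity))
  have hV : 0 ≤ ∫ s in (0 : ℝ)..t, v s :=
    intervalIntegral.integral_nonneg (le_of_lt ht) fun s _ ↦ hv0 s
  exact mul_nonneg (mul_nonneg (Real.exp_pos _).le (ha0 t)) (pow_nonneg hV _)

theorem setIntegral_Ioi_exp_neg_primitive_mul_mul_pow_succ_le (ha : LocallyIntegrable a volume)
    (ha0 : 0 ≤ a) (hv : LocallyIntegrable v volume) (hv0 : 0 ≤ v) {c : ℝ} (hc : 0 ≤ c)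
    (hva : ∀ t, v t ≤ c * a t) (k : ℕ) :
    ∫ t in Ioi 0,
        Real.exp (-∫ s in (0 : ℝ)..t, a s) * a t * (∫ s in (0 : ℝ)..t, v s) ^ (k + 1)
      ≤ (k + 1).factorial * c ^ k
          * ∫ t in Ioi 0, Real.exp (-∫ s in (0 : ℝ)..t, a s) * v t := by
  refine le_of_tendsto_of_tendsto
    (intervalIntegral_tendsto_integral_Ioi 0
      (integrableOn_Ioi_exp_neg_primitive_mul_mul_pow_succ ha ha0 hv hv0 hc hva k) tendsto_id)
    ((intervalIntegral_tendsto_integral_Ioi 0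
      (integrableOn_Ioi_exp_neg_primitive_mul ha hv hv0 hc hva) tendsto_id).const_mul _) ?_
  filter_upwards [eventually_ge_atTop 0] with T hT
  exact integral_exp_neg_primitive_mul_mul_pow_succ_le ha hv hv0 hc hva k hT

theorem setIntegral_Ioi_exp_neg_primitive_mul_mul_primitive_pow_succ_le {b : ℝ → ℝ}
    (ha : LocallyIntegrable a volume) (ha0 : 0 ≤ a) (hb : AEStronglyMeasurable b volume)
    {c : ℝ} (hc : 0 ≤ c) (hba : ∀ t, |b t| ≤ c * a t) (k : ℕ) :
    ∫ t in Ioi 0,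
        Real.exp (-∫ s in (0 : ℝ)..t, a s) * a t * (∫ s in (0 : ℝ)..t, b s) ^ (k + 1)
      ≤ (k + 1).factorial * c ^ k
          * ∫ t in Ioi 0, Real.exp (-∫ s in (0 : ℝ)..t, a s) * |b t| := by
  have hv := ha.abs_of_abs_le_mul hb hba
  have hv0 : 0 ≤ fun t ↦ |b t| := fun t ↦ abs_nonneg (b t)
  refine le_trans ?_ (setIntegral_Ioi_exp_neg_primitive_mul_mul_pow_succ_le ha ha0 hv hv0 hc hba k)
  refine (le_abs_self _).trans <| abs_integral_le_integral_abs.trans <|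
    integral_mono_of_nonneg (ae_of_all _ fun t ↦ abs_nonneg _)
      (integrableOn_Ioi_exp_neg_primitive_mul_mul_pow_succ ha ha0 hv hv0 hc hba k) ?_
  filter_upwards [ae_restrict_mem measurableSet_Ioi] with t ht
  rw [abs_mul, abs_mul, abs_of_pos (Real.exp_pos _), abs_of_nonneg (ha0 t), abs_pow]
  exact mul_le_mul_of_nonneg_left (pow_le_pow_left₀ (abs_nonneg _)
    (intervalIntegral.abs_integral_le_integral_abs (le_of_lt ht)) _)
    (mul_nonneg (Real.exp_pos _).le (ha0 t))

end KilledMoments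

theorem abs_le_iSup_abs_div_iInf_mul {E : Type*} {h q : E → ℝ}
    (hh : BddAbove (range fun z ↦ |h z|)) (hq : 0 ≤ q)
    (hq0 : 0 < ⨅ z : Function.support h, q z) (z : E) :
    |h z| ≤ (⨆ z, |h z|) / (⨅ z : Function.support h, q z) * q z := by
  have hM : 0 ≤ ⨆ z, |h z| := Real.iSup_nonneg fun _ ↦ abs_nonneg _
  by_cases hz : h z = 0
  · rw [hz, abs_zero]
    exact mul_nonneg (div_nonneg hM hq0.le) (hq z)
  · have hq' : BddBelow (range fun y : Function.support h ↦ q y) :=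
      ⟨0, by rintro _ ⟨y, rfl⟩; exact hq y⟩
    rw [div_mul_eq_mul_div, le_div_iff₀ hq0]
    exact mul_le_mul (le_ciSup hh z) (ciInf_le hq' ⟨z, hz⟩) hq0.le hM

theorem stmt16_general {E Ω Ω' : Type*} [MeasurableSpace E] [MeasurableSpace Ω] [MeasurableSpace Ω']
    (Pr : E → Measure Ω)
    (Prs : E → Measure Ω') (hPrs : ∀ x, IsProbabilityMeasure (Prs x))
    (X : ℝ → Ω → E)
    (Xs : ℝ → Ω' → E) (hXs : Measurable fun p : ℝ × Ω' => Xs p.1 p.2)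
    (q : E → ℝ) (hq : Measurable q) (hq0' : ∀ z, 0 ≤ q z) (hqb : ∃ M, ∀ z, q z ≤ M)
    (T1 : Ω → ℝ)
    -- killing representation for path functionals of product form (as in Corollary A.3):
    (hrep : ∀ (x : E) (k : ℕ) (g : Fin k → E → ℝ), (∀ j, Measurable (g j)) →
      ∫ ω, (∏ j : Fin k, ∫ s in (0 : ℝ)..(T1 ω), g j (X s ω)) ∂(Pr x)
        = ∫ ω', (∫ t in Set.Ioi (0 : ℝ),
            Real.exp (-(∫ u in (0 : ℝ)..t, q (Xs u ω'))) * q (Xs t ω') *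
              ∏ j : Fin k, ∫ s in (0 : ℝ)..t, g j (Xs s ω'))
          ∂(Prs x))
    (h : E → ℝ) (hhmeas : Measurable h) (hhbd : ∃ M, ∀ z, |h z| ≤ M)
    -- `q₀ = inf_{z ∈ supp h} q z > 0`:
    (hq0 : 0 < ⨅ z : Function.support h, q (z : E)) :
    ∀ (x : E) (k : ℕ), 1 ≤ k →
      ∫ ω, (∫ s in (0 : ℝ)..(T1 ω), h (X s ω)) ^ k ∂(Pr x)
        ≤ ((k.factorial : ℝ) * (⨆ z : E, |h z|) ^ (k - 1)
              / (⨅ z : Function.support h, q (z : E)) ^ (k - 1)) *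
            ∫ ω', (∫ t in Set.Ioi (0 : ℝ),
                Real.exp (-(∫ u in (0 : ℝ)..t, q (Xs u ω'))) * |h (Xs t ω')|)
              ∂(Prs x) := by
  intro x k hk
  obtain ⟨k, rfl⟩ : ∃ j, k = j + 1 := ⟨k - 1, by omega⟩
  have := hPrs x
  obtain ⟨Kq, hKq⟩ := hqb
  obtain ⟨Mh, hMh⟩ := hhbd
  set c := (⨆ z : E, |h z|) / ⨅ z : Function.support h, q (z : E)
  have hc : 0 ≤ c := div_nonneg (Real.iSup_nonneg fun _ ↦ abs_nonneg _) hq0.le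
  have hhq := abs_le_iSup_abs_div_iInf_mul ⟨Mh, by rintro _ ⟨z, rfl⟩; exact hMh z⟩ hq0' hq0
  have hXs' : Measurable fun p : Ω' × ℝ ↦ Xs p.2 p.1 := hXs.comp measurable_swap
  have hqX (ω' : Ω') : LocallyIntegrable (fun t ↦ q (Xs t ω')) volume :=
    (locallyIntegrable_const Kq).mono
      (hq.comp (hXs'.comp measurable_prodMk_left)).aestronglyMeasurable <| ae_of_all _ fun t ↦ by
        simpa [abs_of_nonneg (hq0' _)] using (hKq _).trans (le_abs_self Kq)
  have hhX (ω' : Ω') : AEStronglyMeasurable (fun t ↦ h (Xs t ω')) volume :=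
    (hhmeas.comp (hXs'.comp measurable_prodMk_left)).aestronglyMeasurable
  have hR : Integrable (fun ω' ↦ ∫ t in Ioi 0,
      Real.exp (-∫ u in (0 : ℝ)..t, q (Xs u ω')) * |h (Xs t ω')|) (Prs x) := by
    refine (integrable_const c).mono' (measurable_setIntegral_exp_neg_primitive_mul
      (a := fun ω' u ↦ q (Xs u ω')) (w := fun ω' t ↦ |h (Xs t ω')|)
      (hq.comp hXs') (hhmeas.comp hXs').abs).aestronglyMeasurable (ae_of_all _ fun ω' ↦ ?_)
    rw [Real.norm_of_nonneg (setIntegral_nonneg measurableSet_Ioi fun t _ ↦ by positivity)]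
    exact setIntegral_Ioi_exp_neg_primitive_mul_le (hqX ω')
      ((hqX ω').abs_of_abs_le_mul (hhX ω') fun t ↦ hhq _) (fun t ↦ abs_nonneg _) hc
      fun t ↦ hhq _
  have hmoment := hrep x (k + 1) (fun _ ↦ h) (fun _ ↦ hhmeas)
  simp only [Finset.prod_const, Finset.card_univ, Fintype.card_fin] at hmoment
  rw [hmoment, Nat.add_sub_cancel, mul_div_assoc, ← div_pow, ← integral_const_mul]
  refine integral_le_integral_of_le_of_nonneg (hR.const_mul _)
    (ae_of_all _ fun ω' ↦ by positivity) (ae_of_all _ fun ω' ↦ ?_)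
  exact setIntegral_Ioi_exp_neg_primitive_mul_mul_primitive_pow_succ_le (hqX ω')
    (fun t ↦ hq0' _) (hhX ω') hc (fun t ↦ hhq _) k

/-- Corollary A.4.  In the setting of Lemma A.2, if `h` is bounded
measurable with `q₀ := inf {q z : z ∈ supp h} > 0`, then for all `k ∈ ℕ*`,
`E^x (∫_0^{T_1} h(X_s) ds)^k ≤ (k! ‖h‖_∞^{k−1} / q₀^{k−1}) · R_q* |h| (x)`. -/
theorem stmt16 {E Ω Ω' : Type*} [MeasurableSpace E] [MeasurableSpace Ω] [MeasurableSpace Ω']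
    (Pr : E → Measure Ω) (hPr : ∀ x, IsProbabilityMeasure (Pr x))
    (Prs : E → Measure Ω') (hPrs : ∀ x, IsProbabilityMeasure (Prs x))
    (X : ℝ → Ω → E) (hX : Measurable fun p : ℝ × Ω => X p.1 p.2)
    (Xs : ℝ → Ω' → E) (hXs : Measurable fun p : ℝ × Ω' => Xs p.1 p.2)
    (q : E → ℝ) (hq : Measurable q) (hq0' : ∀ z, 0 ≤ q z) (hqb : ∃ M, ∀ z, q z ≤ M)
    (T1 : Ω → ℝ) (hT1meas : Measurable T1) (hT1pos : ∀ ω, 0 < T1 ω)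
    -- killing representation for path functionals of product form (as in Corollary A.3):
    (hrep : ∀ (x : E) (k : ℕ) (g : Fin k → E → ℝ), (∀ j, Measurable (g j)) →
      ∫ ω, (∏ j : Fin k, ∫ s in (0 : ℝ)..(T1 ω), g j (X s ω)) ∂(Pr x)
        = ∫ ω', (∫ t in Set.Ioi (0 : ℝ),
            Real.exp (-(∫ u in (0 : ℝ)..t, q (Xs u ω'))) * q (Xs t ω') *
              ∏ j : Fin k, ∫ s in (0 : ℝ)..t, g j (Xs s ω'))
          ∂(Prs x))
    (h : E → ℝ) (hhmeas : Measurable h) (hhbd : ∃ M, ∀ z, |h z| ≤ M)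
    -- `q₀ = inf_{z ∈ supp h} q z > 0`:
    (hq0 : 0 < ⨅ z : Function.support h, q (z : E)) :
    ∀ (x : E) (k : ℕ), 1 ≤ k →
      ∫ ω, (∫ s in (0 : ℝ)..(T1 ω), h (X s ω)) ^ k ∂(Pr x)
        ≤ ((k.factorial : ℝ) * (⨆ z : E, |h z|) ^ (k - 1)
              / (⨅ z : Function.support h, q (z : E)) ^ (k - 1)) *
            ∫ ω', (∫ t in Set.Ioi (0 : ℝ),
                Real.exp (-(∫ u in (0 : ℝ)..t, q (Xs u ω'))) * |h (Xs t ω')|)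
              ∂(Prs x) :=
  stmt16_general Pr Prs hPrs X Xs hXs q hq hq0' hqb T1 hrep h hhmeas hhbd hq0
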